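/- arXiv:2207.05685 — 4 statements merged into one kernel-verified Lean document; each statement's English description precedes it below -/
import Mathlib

section
/- Let D₁ and D₂ be probability distributions over X × Y with finite Y, let H be a class of hypotheses X → Y, and let h ∈ H. Define R_D(h) = Pr_{(x,y)~D}[h(x) ≠ y], and define the HΔH-divergence d(D₁, D₂) = sup_{(p,q) ∈ H²} |E_{x~(D₁)_X}[1[p(x) ≠ q(x)]] − E_{x~(D₂)_X}[1[p(x) ≠ q(x)]]|. Then R_{D₁}(h) ≤ R_{D₂}(h) + d(D₁, D₂) + inf_{η ∈ H} (R_{D₁}(η) + R_{D₂}(η)). -/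
/-!
Fix `η ∈ H`. Probability of disagreement is a pseudometric on labelings, so
`R₁(h) ≤ R₁(η) + P₁(h ≠ η)` and `P₂(h ≠ η) ≤ R₂(h) + R₂(η)`; the events `h ≠ η` depend on `x`
only, and `P₁(h ≠ η) - P₂(h ≠ η)` is one of the quantities under the divergence supremum.
Summing and taking the infimum over `η` gives the bound.
-/

open MeasureTheory

lemma measureReal_ne_le_add {Ω Y : Type*} [MeasurableSpace Ω] (μ : Measure Ω) [IsFiniteMeasure μ]
    (a b c : Ω → Y) :
    μ.real {ω | a ω ≠ c ω} ≤ μ.real {ω | a ω ≠ b ω} + μ.real {ω | b ω ≠ c ω} := by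
  have hsub : {ω | a ω ≠ c ω} ⊆ {ω | a ω ≠ b ω} ∪ {ω | b ω ≠ c ω} := by
    intro ω hac
    by_cases hab : a ω = b ω
    exacts [Or.inr fun hbc => hac (hab.trans hbc), Or.inl hab]
  exact (measureReal_mono hsub).trans (measureReal_union_le _ _)

lemma map_fst_measureReal_ne {X Y Z : Type*} [MeasurableSpace X] [MeasurableSpace Y]
    [MeasurableSpace Z] [MeasurableEq Z] (D : Measure (X × Y)) {p q : X → Z}
    (hp : Measurable p) (hq : Measurable q) :
    (D.map Prod.fst).real {x | p x ≠ q x} = D.real {z | p z.1 ≠ q z.1} :=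
  map_measureReal_apply measurable_fst (measurableSet_eq_fun hp hq).compl

lemma abs_measureReal_sub_measureReal_le_one {α : Type*} [MeasurableSpace α] (μ ν : Measure α)
    [IsZeroOrProbabilityMeasure μ] [IsZeroOrProbabilityMeasure ν] (s t : Set α) :
    |μ.real s - ν.real t| ≤ 1 := by
  have := measureReal_le_one (μ := μ) (s := s)
  have := measureReal_le_one (μ := ν) (s := t)
  rw [abs_sub_le_iff]
  constructor <;> linarith [measureReal_nonneg (μ := μ) (s := s),
    measureReal_nonneg (μ := ν) (s := t)]

lemma risk_le_risk_add_marginal_disagreement_sub_add {X Y : Type*} [MeasurableSpace X]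
    [MeasurableSpace Y] [MeasurableEq Y] (D₁ D₂ : Measure (X × Y))
    [IsFiniteMeasure D₁] [IsFiniteMeasure D₂] {h η : X → Y} (hh : Measurable h)
    (hη : Measurable η) :
    D₁.real {z | h z.1 ≠ z.2} ≤ D₂.real {z | h z.1 ≠ z.2} +
      ((D₁.map Prod.fst).real {x | h x ≠ η x} - (D₂.map Prod.fst).real {x | h x ≠ η x}) +
      (D₁.real {z | η z.1 ≠ z.2} + D₂.real {z | η z.1 ≠ z.2}) := by
  have h₁ := measureReal_ne_le_add D₁ (fun z => h z.1) (fun z => η z.1) Prod.snd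
  have h₂ := measureReal_ne_le_add D₂ (fun z => h z.1) Prod.snd (fun z => η z.1)
  simp only [ne_comm (a := Prod.snd _)] at h₂
  rw [map_fst_measureReal_ne D₁ hh hη, map_fst_measureReal_ne D₂ hh hη]
  linarith

/-- Multiclass adaptation bound with the model-independent `HΔH`-divergence:
`R_{D₁}(h) ≤ R_{D₂}(h) + d_{HΔH}(D₁, D₂) + inf_{η∈H}(R_{D₁}(η) + R_{D₂}(η))`. -/
theorem risk_le_risk_add_HdeltaH_div_add_adaptability
    {X Y : Type*} [MeasurableSpace X] [MeasurableSpace Y] [MeasurableSingletonClass Y]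
    [Finite Y] (D₁ D₂ : Measure (X × Y))
    [IsProbabilityMeasure D₁] [IsProbabilityMeasure D₂]
    (H : Set (X → Y)) (h : X → Y) (hhH : h ∈ H)
    (hmeas : ∀ η ∈ H, Measurable η) :
    let R := fun (D : Measure (X × Y)) (f : X → Y) => (D {p | f p.1 ≠ p.2}).toReal
    let E := fun (μ : Measure X) (p q : X → Y) => (μ {x | p x ≠ q x}).toReal
    R D₁ h ≤ R D₂ h +
      sSup {v : ℝ | ∃ p ∈ H, ∃ q ∈ H,
        v = |E (D₁.map Prod.fst) p q - E (D₂.map Prod.fst) p q|} +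
      sInf {v : ℝ | ∃ η ∈ H, v = R D₁ η + R D₂ η} := by
  simp only [← measureReal_def]
  set S : Set ℝ := {v | ∃ p ∈ H, ∃ q ∈ H, v = |(D₁.map Prod.fst).real {x | p x ≠ q x} -
    (D₂.map Prod.fst).real {x | p x ≠ q x}|}
  have hS_bdd : BddAbove S :=
    ⟨1, by rintro _ ⟨p, -, q, -, rfl⟩; exact abs_measureReal_sub_measureReal_le_one _ _ _ _⟩
  suffices D₁.real {z | h z.1 ≠ z.2} - D₂.real {z | h z.1 ≠ z.2} - sSup S ≤
      sInf {v : ℝ | ∃ η ∈ H, v = D₁.real {z | η z.1 ≠ z.2} + D₂.real {z | η z.1 ≠ z.2}} by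
    linarith
  refine le_csInf ⟨_, h, hhH, rfl⟩ ?_
  rintro _ ⟨η, hη, rfl⟩
  have hη_bound := risk_le_risk_add_marginal_disagreement_sub_add D₁ D₂ (hmeas h hhH) (hmeas η hη)
  have hd := le_csSup hS_bdd ⟨h, hhH, η, hη, rfl⟩
  linarith [le_abs_self ((D₁.map Prod.fst).real {x | h x ≠ η x} -
    (D₂.map Prod.fst).real {x | h x ≠ η x})]
end

section
/- Let D₁ and D₂ be probability distributions over X × Y with finite Y, let H be a class of hypotheses X → Y, and let h ∈ H. Define R_D(h) = Pr_{(x,y)~D}[h(x) ≠ y] and the model-dependent hΔH-divergence d_h(D₁, D₂) = sup_{h' ∈ H} |E_{x~(D₁)_X}[1[h(x) ≠ h'(x)]] − E_{x~(D₂)_X}[1[h(x) ≠ h'(x)]]|. Then R_{D₁}(h) ≤ R_{D₂}(h) + d_h(D₁, D₂) + inf_{η ∈ H} (R_{D₁}(η) + R_{D₂}(η)). -/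
/-!
The proof is the triangle inequality for disagreement probabilities. For any `η ∈ H`,
`R₁(h) ≤ R₁(η) + P₁(h ≠ η)` and `P₂(h ≠ η) ≤ R₂(h) + R₂(η)`, while `P₁(h ≠ η) - P₂(h ≠ η)`
is one of the terms of the supremum `d_h(D₁, D₂)`. Adding these and taking the infimum over `η`
gives the bound.
-/

open MeasureTheory

section Disagreement

variable {α β : Type*} [MeasurableSpace α]

theorem measureReal_setOf_ne_le_add (μ : Measure α) [IsFiniteMeasure μ] (f g k : α → β) :
    μ.real {x | f x ≠ g x} ≤ μ.real {x | f x ≠ k x} + μ.real {x | k x ≠ g x} := by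
  have hsub : {x | f x ≠ g x} ⊆ {x | f x ≠ k x} ∪ {x | k x ≠ g x} := by
    intro x hfg
    by_cases hfk : f x = k x
    · exact Or.inr fun hkg => hfg (hfk.trans hkg)
    · exact Or.inl hfk
  exact (measureReal_mono hsub).trans (measureReal_union_le _ _)

theorem map_measureReal_setOf_ne {γ : Type*} [MeasurableSpace β] [MeasurableEq β]
    [MeasurableSpace γ] (μ : Measure γ) {φ : γ → α} (hφ : Measurable φ) {f g : α → β}
    (hf : Measurable f) (hg : Measurable g) :
    (μ.map φ).real {x | f x ≠ g x} = μ.real {p | f (φ p) ≠ g (φ p)} :=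
  map_measureReal_apply hφ (measurableSet_eq_fun hf hg).compl

end Disagreement

theorem risk_le_risk_add_disagreement_sub_add_risk {X Y : Type*} [MeasurableSpace X]
    [MeasurableSpace Y] (D₁ D₂ : Measure (X × Y)) [IsFiniteMeasure D₁] [IsFiniteMeasure D₂]
    (f g : X → Y) :
    D₁.real {p | f p.1 ≠ p.2} ≤ D₂.real {p | f p.1 ≠ p.2} +
      (D₁.real {p | f p.1 ≠ g p.1} - D₂.real {p | f p.1 ≠ g p.1}) +
      (D₁.real {p | g p.1 ≠ p.2} + D₂.real {p | g p.1 ≠ p.2}) := by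
  have h₁ := measureReal_setOf_ne_le_add D₁ (fun p => f p.1) Prod.snd (fun p => g p.1)
  have h₂ := measureReal_setOf_ne_le_add D₂ (fun p => f p.1) (fun p => g p.1) Prod.snd
  have hsymm : {p : X × Y | p.2 ≠ g p.1} = {p | g p.1 ≠ p.2} := by
    ext p; exact ne_comm
  simp only [hsymm] at h₂
  linarith

/-- Multiclass adaptation bound with the model-dependent `hΔH`-divergence:
`R_{D₁}(h) ≤ R_{D₂}(h) + d_h(D₁, D₂) + inf_{η∈H}(R_{D₁}(η) + R_{D₂}(η))`,
where `d_h` takes the supremum over `h' ∈ H` with the first hypothesis fixed to `h`. -/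
theorem risk_le_risk_add_hdeltaH_div_add_adaptability
    {X Y : Type*} [MeasurableSpace X] [MeasurableSpace Y] [MeasurableSingletonClass Y]
    [Finite Y] (D₁ D₂ : Measure (X × Y))
    [IsProbabilityMeasure D₁] [IsProbabilityMeasure D₂]
    (H : Set (X → Y)) (h : X → Y) (hhH : h ∈ H)
    (hmeas : ∀ η ∈ H, Measurable η) :
    let R := fun (D : Measure (X × Y)) (f : X → Y) => (D {p | f p.1 ≠ p.2}).toReal
    let E := fun (μ : Measure X) (p q : X → Y) => (μ {x | p x ≠ q x}).toReal
    R D₁ h ≤ R D₂ h +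
      sSup {v : ℝ | ∃ h' ∈ H,
        v = |E (D₁.map Prod.fst) h h' - E (D₂.map Prod.fst) h h'|} +
      sInf {v : ℝ | ∃ η ∈ H, v = R D₁ η + R D₂ η} := by
  intro R E
  have hE (D : Measure (X × Y)) (η : X → Y) (hη : η ∈ H) :
      E (D.map Prod.fst) h η = D.real {p | h p.1 ≠ η p.1} :=
    map_measureReal_setOf_ne D measurable_fst (hmeas h hhH) (hmeas η hη)
  have hdiv_bdd : BddAbove {v : ℝ | ∃ h' ∈ H,
      v = |E (D₁.map Prod.fst) h h' - E (D₂.map Prod.fst) h h'|} := by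
    refine ⟨1, ?_⟩
    rintro _ ⟨h', hh', rfl⟩
    rw [hE D₁ h' hh', hE D₂ h' hh']
    exact abs_sub_le_of_nonneg_of_le measureReal_nonneg measureReal_le_one measureReal_nonneg
      measureReal_le_one
  suffices R D₁ h - R D₂ h - sSup {v : ℝ | ∃ h' ∈ H,
      v = |E (D₁.map Prod.fst) h h' - E (D₂.map Prod.fst) h h'|} ≤
      sInf {v : ℝ | ∃ η ∈ H, v = R D₁ η + R D₂ η} by linarith
  refine le_csInf ⟨_, h, hhH, rfl⟩ ?_
  rintro _ ⟨η, hη, rfl⟩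
  have htransfer := risk_le_risk_add_disagreement_sub_add_risk D₁ D₂ h η
  have hdiv := (le_abs_self _).trans (le_csSup hdiv_bdd ⟨η, hη, rfl⟩)
  rw [hE D₁ η hη, hE D₂ η hη] at hdiv
  change D₁.real _ - D₂.real _ - _ ≤ D₁.real _ + D₂.real _
  linarith
end

section
/- Let D be a probability distribution over X × {0,1}, let f, g : X → ℝ^C be score functions with C ≥ 2, and let τ : ℝ → ℝ_{≥0} be monotone increasing. Define φ(x) = 1[argmax_ℓ f_ℓ(x) ≠ argmax_ℓ g_ℓ(x)], A(x)_{jk} = τ(g_j(x))·τ(f_k(x)), z(x) = max_{(j,k)} A(x)_{jk} − max_i A(x)_{ii}, and L(z,y) = ln(1 + exp(−(2y−1)·z))/ln 2. If, D-almost surely, f(X) has no repeated entries and g(X) has no repeated entries, then E_{(X,Y)~D}[1[φ(X) ≠ Y]] ≤ E_{(X,Y)~D}[L(z(X), Y)]. -/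
open MeasureTheory

/-- The score `z(x) = max_{(j,k)} A(x)_{jk} − max_i A(x)_{ii}` built from the outer product
`A(x)_{jk} = τ(g_j(x))·τ(f_k(x))`. -/
noncomputable def zScore {X : Type*} (C : ℕ) (τ : ℝ → ℝ) (f g : X → Fin C → ℝ) (x : X) : ℝ :=
  sSup {v : ℝ | ∃ j k : Fin C, v = τ (g x j) * τ (f x k)} -
    sSup {v : ℝ | ∃ i : Fin C, v = τ (g x i) * τ (f x i)}

/-- The scaled logistic surrogate loss `L(z,y) = ln(1+exp(−(2y−1)z))/ln 2`. -/
noncomputable def Lloss (z y : ℝ) : ℝ :=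
  Real.log (1 + Real.exp (-(2 * y - 1) * z)) / Real.log 2

lemma Lloss_nonneg (z y : ℝ) : 0 ≤ Lloss z y := by
  unfold Lloss
  apply div_nonneg
  · exact Real.log_nonneg (by linarith [Real.exp_pos (-(2 * y - 1) * z)])
  · exact Real.log_nonneg (by norm_num)

lemma one_le_Lloss {z y : ℝ} (h : 0 ≤ -(2 * y - 1) * z) : 1 ≤ Lloss z y := by
  unfold Lloss
  rw [le_div_iff₀ (Real.log_pos (by norm_num)), one_mul]
  apply Real.log_le_log (by norm_num)
  have := Real.one_le_exp h
  linarith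

/-- Surrogate bound on the 0-1 risk of the disagreement classifier
`φ(x) = 1[argmax f(x) ≠ argmax g(x)]`: if, `D`-almost surely, the scores of `f` and `g` have
no repeated entries, then `E_D[1[φ(X) ≠ Y]] ≤ E_D[L(z(X), Y)]`. -/
theorem disagreement_risk_le_surrogate {X : Type*} [MeasurableSpace X]
    (C : ℕ) (hC : 2 ≤ C)
    (D : Measure (X × Bool)) [IsProbabilityMeasure D]
    (f g : X → Fin C → ℝ) (τ : ℝ → ℝ)
    (hτ0 : ∀ r, 0 ≤ τ r) (hτ : StrictMono τ)
    (φ : X → Bool)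
    (hφ : ∀ x : X,
      (φ x = false ↔ ∃ ℓ : Fin C, (∀ j, f x j ≤ f x ℓ) ∧ (∀ j, g x j ≤ g x ℓ)))
    (hdist : ∀ᵐ p ∂D, Function.Injective (f p.1) ∧ Function.Injective (g p.1))
    (hint1 : Integrable (fun p : X × Bool => if φ p.1 ≠ p.2 then (1 : ℝ) else 0) D)
    (hint2 : Integrable
      (fun p : X × Bool => Lloss (zScore C τ f g p.1) (if p.2 then (1 : ℝ) else 0)) D) :
    ∫ p, (if φ p.1 ≠ p.2 then (1 : ℝ) else 0) ∂D ≤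
      ∫ p, Lloss (zScore C τ f g p.1) (if p.2 then (1 : ℝ) else 0) ∂D := by
  have hCpos : 0 < C := by omega
  -- basic facts about the sup sets
  have key : ∀ x : X,
      (0 ≤ zScore C τ f g x) ∧ (φ x = false → zScore C τ f g x = 0) := by
    intro x
    set Sall : Set ℝ := {v : ℝ | ∃ j k : Fin C, v = τ (g x j) * τ (f x k)} with hSall
    set Sdiag : Set ℝ := {v : ℝ | ∃ i : Fin C, v = τ (g x i) * τ (f x i)} with hSdiag
    have hall_range : Sall = Set.range (fun p : Fin C × Fin C => τ (g x p.1) * τ (f x p.2)) := by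
      ext v; constructor
      · rintro ⟨j, k, rfl⟩; exact ⟨(j, k), rfl⟩
      · rintro ⟨⟨j, k⟩, rfl⟩; exact ⟨j, k, rfl⟩
    have hdiag_range : Sdiag = Set.range (fun i : Fin C => τ (g x i) * τ (f x i)) := by
      ext v; constructor
      · rintro ⟨i, rfl⟩; exact ⟨i, rfl⟩
      · rintro ⟨i, rfl⟩; exact ⟨i, rfl⟩
    have hall_bdd : BddAbove Sall := by
      rw [hall_range]; exact (Set.finite_range _).bddAbove
    have hdiag_bdd : BddAbove Sdiag := by
      rw [hdiag_range]; exact (Set.finite_range _).bddAbove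
    have i0 : Fin C := ⟨0, hCpos⟩
    have hdiag_ne : Sdiag.Nonempty := ⟨τ (g x i0) * τ (f x i0), i0, rfl⟩
    have hsub : Sdiag ⊆ Sall := by rintro v ⟨i, rfl⟩; exact ⟨i, i, rfl⟩
    have hle : sSup Sdiag ≤ sSup Sall := csSup_le_csSup hall_bdd hdiag_ne hsub
    constructor
    · simpa [zScore, ← hSall, ← hSdiag] using sub_nonneg.mpr hle
    · intro hfalse
      obtain ⟨ℓ, hf, hg⟩ := (hφ x).mp hfalse
      have hall_ne : Sall.Nonempty := ⟨τ (g x i0) * τ (f x i0), i0, i0, rfl⟩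
      have hup : sSup Sall ≤ τ (g x ℓ) * τ (f x ℓ) := by
        apply csSup_le hall_ne
        rintro v ⟨j, k, rfl⟩
        exact mul_le_mul (hτ.monotone (hg j)) (hτ.monotone (hf k)) (hτ0 _) (hτ0 _)
      have hlo : τ (g x ℓ) * τ (f x ℓ) ≤ sSup Sdiag := le_csSup hdiag_bdd ⟨ℓ, rfl⟩
      have : sSup Sall = sSup Sdiag := le_antisymm (hup.trans hlo) hle
      simp [zScore, ← hSall, ← hSdiag, this]
  apply integral_mono hint1 hint2
  rintro ⟨x, y⟩
  obtain ⟨hz0, hzeq⟩ := key x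
  dsimp only
  cases hφx : φ x <;> cases y <;> simp only [hφx, ne_eq, Bool.false_eq_true,
      Bool.true_eq_false, not_false_eq_true, not_true_eq_false, if_true, if_false,
      ite_true, ite_false, ite_self]
  · exact Lloss_nonneg _ _
  · rw [hzeq hφx]
    apply one_le_Lloss
    norm_num
  · apply one_le_Lloss
    nlinarith [hz0]
  · exact Lloss_nonneg _ _
end

section
/- Let S and T be finite samples (empirical distributions) over X × Y, let H ⊆ Y^X, and for h ∈ H let C_h denote either HΔH or hΔH. Then for all h ∈ H: |R_S(h) − R_T(h)| ≤ λ̃ + d_{C_h}(S_X, T_X), where λ̃ = min_{η∈H}(R_S(η) + R_T(η)), R_D(h) is empirical 0-1 risk under D, and d_C is the C-divergence between the X-marginals, assuming the minimum defining λ̃ and the suprema defining the divergence are attained. -/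
/-!
For any `η ∈ H`, the 0-1 loss and the disagreement indicator satisfy the triangle inequality of
the discrete metric on `Y`. Averaging it over each sample gives
`R_S(h) ≤ R_S(η) + S_X[h ≠ η]` and `T_X[h ≠ η] ≤ R_T(h) + R_T(η)` (and symmetrically), so
`|R_S(h) − R_T(h)| ≤ R_S(η) + R_T(η) + |S_X[h ≠ η] − T_X[h ≠ η]|`. Taking `η` a minimiser of
`R_S + R_T` bounds the first two terms by `λ̃`; the last term is one of the values whose
supremum is the divergence over `HΔH`, or over `hΔH`.
-/

lemma Multiset.natCast_card_filter {α R : Type*} [AddCommMonoidWithOne R] (p : α → Prop)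
    [DecidablePred p] (M : Multiset α) :
    ((M.filter p).card : R) = (M.map fun a => if p a then (1 : R) else 0).sum := by
  induction M using Multiset.induction_on with
  | empty => simp
  | cons a s ih => by_cases h : p a <;> simp [h, ih, add_comm]

lemma ite_ne_le_ite_ne_add_ite_ne {Y : Type*} [DecidableEq Y] (a b c : Y) :
    (if a ≠ c then (1 : ℝ) else 0) ≤ (if a ≠ b then 1 else 0) + (if b ≠ c then 1 else 0) := by
  split_ifs <;> simp_all

section EmpiricalMean

variable {α : Type*}

noncomputable def empiricalMean (M : Multiset α) (φ : α → ℝ) : ℝ := (M.map φ).sum / M.card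

lemma empiricalMean_mono {M : Multiset α} {φ ψ : α → ℝ} (h : ∀ a ∈ M, φ a ≤ ψ a) :
    empiricalMean M φ ≤ empiricalMean M ψ :=
  div_le_div_of_nonneg_right (Multiset.sum_map_le_sum_map φ ψ h) (Nat.cast_nonneg _)

lemma empiricalMean_add (M : Multiset α) (φ ψ : α → ℝ) :
    empiricalMean M (fun a => φ a + ψ a) = empiricalMean M φ + empiricalMean M ψ := by
  rw [empiricalMean, Multiset.sum_map_add, add_div, empiricalMean, empiricalMean]

lemma empiricalMean_map {β : Type*} (M : Multiset α) (g : α → β) (φ : β → ℝ) :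
    empiricalMean (M.map g) φ = empiricalMean M (φ ∘ g) := by
  rw [empiricalMean, empiricalMean, Multiset.map_map, Multiset.card_map]

lemma empiricalMean_nonneg {M : Multiset α} {φ : α → ℝ} (h : ∀ a, 0 ≤ φ a) :
    0 ≤ empiricalMean M φ :=
  div_nonneg (Multiset.sum_nonneg fun _ ha => by
    obtain ⟨a, -, rfl⟩ := Multiset.mem_map.mp ha; exact h a) (Nat.cast_nonneg _)

lemma empiricalMean_le_one {M : Multiset α} {φ : α → ℝ} (h : ∀ a, φ a ≤ 1) :
    empiricalMean M φ ≤ 1 := by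
  rcases eq_or_ne M 0 with rfl | hM
  · simp [empiricalMean]
  have hcard : (0 : ℝ) < M.card := by exact_mod_cast Multiset.card_pos.mpr hM
  rw [empiricalMean, div_le_one hcard]
  simpa using Multiset.sum_map_le_sum_map φ (fun _ => (1 : ℝ)) fun a _ => h a

lemma abs_empiricalMean_sub_le_one (M N : Multiset α) {φ : α → ℝ} (h₀ : ∀ a, 0 ≤ φ a)
    (h₁ : ∀ a, φ a ≤ 1) : |empiricalMean M φ - empiricalMean N φ| ≤ 1 :=
  abs_sub_le_of_nonneg_of_le (empiricalMean_nonneg h₀) (empiricalMean_le_one h₁)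
    (empiricalMean_nonneg h₀) (empiricalMean_le_one h₁)

end EmpiricalMean

section ZeroOneRisk

variable {X Y : Type*} [DecidableEq Y]

noncomputable def zeroOneRisk (M : Multiset (X × Y)) (f : X → Y) : ℝ :=
  ((M.filter fun pr => f pr.1 ≠ pr.2).card : ℝ) / M.card

def disagreement (p q : X → Y) (x : X) : ℝ := if p x ≠ q x then 1 else 0

lemma zeroOneRisk_eq_empiricalMean (M : Multiset (X × Y)) (f : X → Y) :
    zeroOneRisk M f = empiricalMean M fun pr => if f pr.1 ≠ pr.2 then 1 else 0 := by
  rw [zeroOneRisk, Multiset.natCast_card_filter, empiricalMean]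

lemma abs_empiricalMean_disagreement_sub_le_one (M N : Multiset X) (p q : X → Y) :
    |empiricalMean M (disagreement p q) - empiricalMean N (disagreement p q)| ≤ 1 :=
  abs_empiricalMean_sub_le_one M N (fun x => by unfold disagreement; split_ifs <;> norm_num)
    (fun x => by unfold disagreement; split_ifs <;> norm_num)

lemma zeroOneRisk_le_add_disagreement (M : Multiset (X × Y)) (h η : X → Y) :
    zeroOneRisk M h ≤ zeroOneRisk M η + empiricalMean (M.map Prod.fst) (disagreement h η) := by
  rw [zeroOneRisk_eq_empiricalMean, zeroOneRisk_eq_empiricalMean, empiricalMean_map, add_comm,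
    ← empiricalMean_add]
  exact empiricalMean_mono fun pr _ => ite_ne_le_ite_ne_add_ite_ne (h pr.1) (η pr.1) pr.2

lemma disagreement_le_zeroOneRisk_add (M : Multiset (X × Y)) (h η : X → Y) :
    empiricalMean (M.map Prod.fst) (disagreement h η) ≤ zeroOneRisk M h + zeroOneRisk M η := by
  rw [zeroOneRisk_eq_empiricalMean, zeroOneRisk_eq_empiricalMean, empiricalMean_map,
    ← empiricalMean_add]
  refine empiricalMean_mono fun pr _ => ?_
  simpa only [Function.comp, disagreement, ne_comm (a := pr.2)] using ite_ne_le_ite_ne_add_ite_ne (h pr.1) pr.2 (η pr.1)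

lemma abs_zeroOneRisk_sub_le (S T : Multiset (X × Y)) (h η : X → Y) :
    |zeroOneRisk S h - zeroOneRisk T h| ≤ zeroOneRisk S η + zeroOneRisk T η +
      |empiricalMean (S.map Prod.fst) (disagreement h η) -
        empiricalMean (T.map Prod.fst) (disagreement h η)| := by
  set dS := empiricalMean (S.map Prod.fst) (disagreement h η)
  set dT := empiricalMean (T.map Prod.fst) (disagreement h η)
  have hS₁ : zeroOneRisk S h ≤ zeroOneRisk S η + dS := zeroOneRisk_le_add_disagreement S h η
  have hS₂ : dS ≤ zeroOneRisk S h + zeroOneRisk S η := disagreement_le_zeroOneRisk_add S h η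
  have hT₁ : zeroOneRisk T h ≤ zeroOneRisk T η + dT := zeroOneRisk_le_add_disagreement T h η
  have hT₂ : dT ≤ zeroOneRisk T h + zeroOneRisk T η := disagreement_le_zeroOneRisk_add T h η
  rw [abs_sub_le_iff]
  constructor <;> linarith [le_abs_self (dS - dT), neg_abs_le (dS - dT)]

end ZeroOneRisk

theorem error_gap_le_adaptability_add_div_general {X Y : Type*} [DecidableEq Y]
    (S T : Multiset (X × Y)) (H : Set (X → Y)) :
    let R := fun (M : Multiset (X × Y)) (f : X → Y) =>
      ((M.filter (fun pr => f pr.1 ≠ pr.2)).card : ℝ) / M.card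
    let E := fun (M : Multiset X) (φ : X → ℝ) => (M.map φ).sum / M.card
    let ind := fun (p q : X → Y) (x : X) => if p x ≠ q x then (1 : ℝ) else 0
    let dHH := sSup {v : ℝ | ∃ p ∈ H, ∃ q ∈ H,
      v = |E (S.map Prod.fst) (ind p q) - E (T.map Prod.fst) (ind p q)|}
    let dh := fun (h : X → Y) => sSup {v : ℝ | ∃ h' ∈ H,
      v = |E (S.map Prod.fst) (ind h h') - E (T.map Prod.fst) (ind h h')|}
    let lam := sInf {v : ℝ | ∃ η ∈ H, v = R S η + R T η}
    (∃ η ∈ H, R S η + R T η = lam) →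
    (∃ p ∈ H, ∃ q ∈ H,
      |E (S.map Prod.fst) (ind p q) - E (T.map Prod.fst) (ind p q)| = dHH) →
    (∀ h ∈ H, ∃ h' ∈ H,
      |E (S.map Prod.fst) (ind h h') - E (T.map Prod.fst) (ind h h')| = dh h) →
    ∀ h ∈ H, |R S h - R T h| ≤ lam + dHH ∧ |R S h - R T h| ≤ lam + dh h := by
  intro R E ind dHH dh lam ⟨η, hηH, hη⟩ _ _ h hH
  have hgap : |R S h - R T h| ≤
      lam + |E (S.map Prod.fst) (ind h η) - E (T.map Prod.fst) (ind h η)| :=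
    hη ▸ abs_zeroOneRisk_sub_le S T h η
  have hbdd : ∀ p q, |E (S.map Prod.fst) (ind p q) - E (T.map Prod.fst) (ind p q)| ≤ 1 :=
    abs_empiricalMean_disagreement_sub_le_one _ _
  have hdHH : |E (S.map Prod.fst) (ind h η) - E (T.map Prod.fst) (ind h η)| ≤ dHH :=
    le_csSup ⟨1, by rintro v ⟨p, -, q, -, rfl⟩; exact hbdd p q⟩ ⟨h, hH, η, hηH, rfl⟩
  have hdh : |E (S.map Prod.fst) (ind h η) - E (T.map Prod.fst) (ind h η)| ≤ dh h :=
    le_csSup ⟨1, by rintro v ⟨h', -, rfl⟩; exact hbdd h h'⟩ ⟨η, hηH, rfl⟩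
  exact ⟨by linarith, by linarith⟩

/-- Per-hypothesis error-gap bound on finite samples: for all `h ∈ H`,
`|R_S(h) − R_T(h)| ≤ λ̃ + d_{C_h}(S_X, T_X)`, where `C_h` is either `HΔH` or `hΔH`,
`λ̃ = min_{η∈H}(R_S(η) + R_T(η))`, assuming the minimum defining `λ̃` and the
suprema defining the divergences are attained. -/
theorem error_gap_le_adaptability_add_div {X Y : Type*} [DecidableEq Y]
    (S T : Multiset (X × Y)) (hS : S ≠ 0) (hT : T ≠ 0) (H : Set (X → Y)) :
    let R := fun (M : Multiset (X × Y)) (f : X → Y) =>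
      ((M.filter (fun pr => f pr.1 ≠ pr.2)).card : ℝ) / M.card
    let E := fun (M : Multiset X) (φ : X → ℝ) => (M.map φ).sum / M.card
    let ind := fun (p q : X → Y) (x : X) => if p x ≠ q x then (1 : ℝ) else 0
    let dHH := sSup {v : ℝ | ∃ p ∈ H, ∃ q ∈ H,
      v = |E (S.map Prod.fst) (ind p q) - E (T.map Prod.fst) (ind p q)|}
    let dh := fun (h : X → Y) => sSup {v : ℝ | ∃ h' ∈ H,
      v = |E (S.map Prod.fst) (ind h h') - E (T.map Prod.fst) (ind h h')|}
    let lam := sInf {v : ℝ | ∃ η ∈ H, v = R S η + R T η}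
    (∃ η ∈ H, R S η + R T η = lam) →
    (∃ p ∈ H, ∃ q ∈ H,
      |E (S.map Prod.fst) (ind p q) - E (T.map Prod.fst) (ind p q)| = dHH) →
    (∀ h ∈ H, ∃ h' ∈ H,
      |E (S.map Prod.fst) (ind h h') - E (T.map Prod.fst) (ind h h')| = dh h) →
    ∀ h ∈ H, |R S h - R T h| ≤ lam + dHH ∧ |R S h - R T h| ≤ lam + dh h :=
  error_gap_le_adaptability_add_div_general S T H
end
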